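/- Let B be a reduced abelian p-group, S a finite subgroup of B, and β an ordinal such that u_β(B) is finite. If there exists an element w ∈ P_β(B) of height exactly β which is proper with respect to S, then the dimension of the ℤ/pℤ-vector space (S ∩ B_β ∩ p^{-1}B_{β+2})/(S ∩ B_{β+1}) is strictly less than u_β(B). -/

import Mathlib

/-!
If `x ∈ B_β` and `px ∈ B_{β+2} = pB_{β+1}`, say `px = pu` with `u ∈ B_{β+1}`, then
`x = (x - u) + u ∈ P_β + B_{β+1}`. By the second isomorphism theorem the quotient
`(S ∩ B_β ∩ p⁻¹B_{β+2})/(S ∩ B_{β+1})` therefore embeds into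
`(P_β + B_{β+1})/B_{β+1} ≅ P_β/P_{β+1}`, with image inside `(S + B_{β+1})/B_{β+1}`.
The class of `w` is not in the image: `w ∈ S + B_{β+1}` would give `s ∈ S` with
`h(w + s) > β = h(w)`, contradicting properness. An injective, non-surjective linear map into a
finite-dimensional space lowers the dimension.
-/

open Ordinal

/-- Scalar multiplication by `p` as an additive group homomorphism. -/
def pHom (p : ℕ) (G : Type*) [AddCommGroup G] : G →+ G :=
  AddMonoidHom.mk' (fun x => p • x) (fun a b => smul_add p a b)

@[simp] lemma pHom_apply (p : ℕ) {G : Type*} [AddCommGroup G] (x : G) :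
    pHom p G x = p • x := rfl

/-- The Ulm subgroups `G_β`: `G_0 = G`, `G_{β+1} = pG_β`, and intersections at limits. -/
noncomputable def ulmSub (p : ℕ) (G : Type*) [AddCommGroup G] (β : Ordinal.{0}) :
    AddSubgroup G :=
  Ordinal.limitRecOn β ⊤ (fun _ H => AddSubgroup.map (pHom p G) H)
    (fun o _ ih => ⨅ (γ : Ordinal.{0}) (h : γ < o), ih γ h)

lemma ulmSub_succ (p : ℕ) (G : Type*) [AddCommGroup G] (β : Ordinal.{0}) :
    ulmSub p G (β + 1) = AddSubgroup.map (pHom p G) (ulmSub p G β) := by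
  unfold ulmSub
  rw [Ordinal.add_one_eq_succ, Ordinal.limitRecOn_succ]

lemma ulmSub_succ_le (p : ℕ) (G : Type*) [AddCommGroup G] (β : Ordinal.{0}) :
    ulmSub p G (β + 1) ≤ ulmSub p G β := by
  rw [ulmSub_succ]
  rintro x ⟨y, hy, rfl⟩
  simpa using (ulmSub p G β).nsmul_mem hy p

/-- An abelian `p`-group: every element is killed by some power of `p`. -/
def IsAbelianPGroup (p : ℕ) (G : Type*) [AddCommGroup G] : Prop :=
  ∀ x : G, ∃ n : ℕ, p ^ n • x = 0

/-- The length `λ(G)`: the least ordinal `β` with `G_β = G_{β+1}`. -/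
noncomputable def ulmLength (p : ℕ) (G : Type*) [AddCommGroup G] : Ordinal.{0} :=
  sInf {β : Ordinal.{0} | ulmSub p G β = ulmSub p G (β + 1)}

/-- `G` is reduced if `G_{λ(G)} = {0}`. -/
def IsReducedPGroup (p : ℕ) (G : Type*) [AddCommGroup G] : Prop :=
  ulmSub p G (ulmLength p G) = ⊥

/-- `P_β(G) = {x ∈ G_β : px = 0}`. -/
noncomputable def ulmP (p : ℕ) (G : Type*) [AddCommGroup G] (β : Ordinal.{0}) : AddSubgroup G :=
  (pHom p G).ker ⊓ ulmSub p G β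

/-- The quotient `P_β(G)/P_{β+1}(G)` (as a quotient of `P_β(G)` by the subgroup
corresponding to `P_{β+1}(G)`). -/
noncomputable def ulmQuot (p : ℕ) (G : Type*) [AddCommGroup G] (β : Ordinal.{0}) :=
  (ulmP p G β) ⧸ ((ulmP p G (β + 1)).addSubgroupOf (ulmP p G β))

noncomputable instance (p : ℕ) (G : Type*) [AddCommGroup G] (β : Ordinal.{0}) :
    AddCommGroup (ulmQuot p G β) :=
  inferInstanceAs (AddCommGroup ((ulmP p G β) ⧸ ((ulmP p G (β + 1)).addSubgroupOf (ulmP p G β))))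

noncomputable instance (p : ℕ) (G : Type*) [AddCommGroup G] (β : Ordinal.{0}) :
    Module (ZMod p) (ulmQuot p G β) :=
  QuotientAddGroup.zmodModule (by
    intro x
    simp only [AddSubgroup.mem_addSubgroupOf]
    have hx : ((p • x : ulmP p G β) : G) = 0 := by
      have := (AddSubgroup.mem_inf.mp x.2).1
      rw [AddMonoidHom.mem_ker, pHom_apply] at this
      simpa using this
    rw [hx]
    exact (ulmP p G (β + 1)).zero_mem)

/-- The Ulm invariant `u_β(G)`: the dimension of `P_β(G)/P_{β+1}(G)` over `ℤ/pℤ`. -/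
noncomputable def ulmInvariant (p : ℕ) (G : Type*) [AddCommGroup G] (β : Ordinal.{0}) :
    Cardinal :=
  Module.rank (ZMod p) (ulmQuot p G β)

open Classical in
/-- The height of `x`: the unique ordinal `β` with `x ∈ G_β \ G_{β+1}` if it exists, and `∞`
(= `⊤`) otherwise. -/
noncomputable def height (p : ℕ) {G : Type*} [AddCommGroup G] (x : G) : WithTop Ordinal.{0} :=
  if ∃ β : Ordinal.{0}, x ∈ ulmSub p G β ∧ x ∉ ulmSub p G (β + 1) then
    ((sInf {β : Ordinal.{0} | x ∈ ulmSub p G β ∧ x ∉ ulmSub p G (β + 1)} : Ordinal.{0}) :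
      WithTop Ordinal.{0})
  else ⊤

/-- `d` is proper with respect to `S` if `h(d) ≥ h(d+s)` for every `s ∈ S`. -/
def ProperWRT (p : ℕ) {G : Type*} [AddCommGroup G] (S : AddSubgroup G) (d : G) : Prop :=
  ∀ s ∈ S, height p (d + s) ≤ height p d

/-- The subgroup `S ∩ B_β ∩ p⁻¹B_{β+2}`, where `p⁻¹B_{β+2} = {x : px ∈ B_{β+2}}`. -/
noncomputable def kapSub (p : ℕ) {B : Type*} [AddCommGroup B] (S : AddSubgroup B)
    (β : Ordinal.{0}) : AddSubgroup B :=
  S ⊓ ulmSub p B β ⊓ (ulmSub p B (β + 2)).comap (pHom p B)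

/-- The quotient `(S ∩ B_β ∩ p⁻¹B_{β+2}) / (S ∩ B_{β+1})`. -/
noncomputable def kapQuot (p : ℕ) {B : Type*} [AddCommGroup B] (S : AddSubgroup B)
    (β : Ordinal.{0}) :=
  kapSub p S β ⧸ ((S ⊓ ulmSub p B (β + 1)).addSubgroupOf (kapSub p S β))

noncomputable instance (p : ℕ) {B : Type*} [AddCommGroup B] (S : AddSubgroup B)
    (β : Ordinal.{0}) : AddCommGroup (kapQuot p S β) :=
  inferInstanceAs
    (AddCommGroup (kapSub p S β ⧸ ((S ⊓ ulmSub p B (β + 1)).addSubgroupOf (kapSub p S β))))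

noncomputable instance (p : ℕ) {B : Type*} [AddCommGroup B] (S : AddSubgroup B)
    (β : Ordinal.{0}) : Module (ZMod p) (kapQuot p S β) :=
  QuotientAddGroup.zmodModule (by
    intro x
    have hx := x.2
    simp only [kapSub, AddSubgroup.mem_inf, AddSubgroup.mem_comap, pHom_apply] at hx
    simp only [AddSubgroup.mem_addSubgroupOf, AddSubgroup.mem_inf]
    have hc : ((p • x : kapSub p S β) : B) = p • (x : B) := rfl
    rw [hc]
    refine ⟨S.nsmul_mem hx.1.1 p, ?_⟩
    have h2 : (β + 2 : Ordinal.{0}) = (β + 1) + 1 := by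
      rw [add_assoc]; norm_num
    exact ulmSub_succ_le p B (β + 1) (by rw [← h2]; exact hx.2))

open Function

theorem AddSubgroup.exists_injective_quotient_of_le_sup {G : Type*} [AddCommGroup G]
    {K H N : AddSubgroup G} (hK : K ≤ H ⊔ N) :
    ∃ f : K ⧸ N.addSubgroupOf K →+ H ⧸ N.addSubgroupOf H, Injective f ∧
      ∀ x : H, (x : H ⧸ N.addSubgroupOf H) ∈ f.range → (x : G) ∈ K ⊔ N := by
  let g := QuotientAddGroup.map (N.addSubgroupOf K) (N.addSubgroupOf (H ⊔ N))
    (AddSubgroup.inclusion hK) (fun x hx => hx)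
  have hg : Injective g := by
    intro a b hab
    induction a using QuotientAddGroup.induction_on with | H a =>
    induction b using QuotientAddGroup.induction_on with | H b =>
    have hab' : (inclusion hK a : ↥(H ⊔ N) ⧸ N.addSubgroupOf (H ⊔ N)) = inclusion hK b := hab
    rw [QuotientAddGroup.eq, mem_addSubgroupOf] at hab' ⊢
    simpa using hab'
  let e := QuotientAddGroup.quotientInfEquivSumNormalQuotient H N
  refine ⟨e.symm.toAddMonoidHom.comp g, e.symm.injective.comp hg, fun x ⟨y, hy⟩ => ?_⟩
  induction y using QuotientAddGroup.induction_on with | H k =>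
  have hkx : (inclusion hK k : ↥(H ⊔ N) ⧸ N.addSubgroupOf (H ⊔ N)) =
      (inclusion le_sup_left x : ↥(H ⊔ N)) :=
    e.symm_apply_eq.mp hy
  rw [QuotientAddGroup.eq, mem_addSubgroupOf] at hkx
  simpa using add_mem (mem_sup_left k.2) (mem_sup_right hkx)

universe u v

theorem rank_lt_rank_of_injective_of_notMem_range {K : Type u} {V W : Type v} [DivisionRing K]
    [AddCommGroup V] [Module K V] [AddCommGroup W] [Module K W] [FiniteDimensional K W]
    (f : V →ₗ[K] W) (hf : Injective f) {w : W} (hw : w ∉ LinearMap.range f) :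
    Module.rank K V < Module.rank K W := by
  rw [← rank_range_of_injective f hf, ← Module.finrank_eq_rank, ← Module.finrank_eq_rank]
  exact_mod_cast Submodule.finrank_lt fun h => hw (by rw [h]; exact Submodule.mem_top)

section Ulm

variable (p : ℕ) {G : Type*} [AddCommGroup G]

theorem ulmSub_antitone : Antitone (ulmSub p G) := by
  intro γ δ hγδ
  induction δ using Ordinal.limitRecOn with
  | zero => rw [nonpos_iff_eq_zero.mp hγδ]
  | add_one ξ ih =>
    rcases hγδ.eq_or_lt with rfl | hlt
    · exact le_rfl
    · exact (ulmSub_succ_le p G ξ).trans (ih (Order.lt_add_one_iff.mp hlt))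
  | limit o ho ih =>
    rcases hγδ.eq_or_lt with rfl | hlt
    · exact le_rfl
    · unfold ulmSub
      rw [Ordinal.limitRecOn_limit _ _ _ _ ho]
      exact iInf₂_le γ hlt

theorem ulmSub_add_two (β : Ordinal.{0}) :
    ulmSub p G (β + 2) = (ulmSub p G (β + 1)).map (pHom p G) := by
  rw [← ulmSub_succ, add_assoc, one_add_one_eq_two]

theorem ulmSub_inf_comap_ulmSub_add_two_le (β : Ordinal.{0}) :
    ulmSub p G β ⊓ (ulmSub p G (β + 2)).comap (pHom p G) ≤ ulmP p G β ⊔ ulmSub p G (β + 1) := by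
  rintro x ⟨hxβ, hpx⟩
  obtain ⟨u, hu, hpu⟩ : ∃ u ∈ ulmSub p G (β + 1), p • u = p • x := by
    simpa [ulmSub_add_two] using hpx
  have hxu : x - u ∈ ulmP p G β :=
    AddSubgroup.mem_inf.mpr
      ⟨by simp [smul_sub, hpu], sub_mem hxβ (ulmSub_succ_le p G β hu)⟩
  simpa using add_mem (AddSubgroup.mem_sup_left hxu) (AddSubgroup.mem_sup_right hu)

theorem height_le_of_mem_of_notMem {x : G} {β : Ordinal.{0}} (h₁ : x ∈ ulmSub p G β)
    (h₂ : x ∉ ulmSub p G (β + 1)) : height p x ≤ β := by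
  rw [height, if_pos ⟨β, h₁, h₂⟩]
  exact WithTop.coe_le_coe.mpr (csInf_le (OrderBot.bddBelow _) ⟨h₁, h₂⟩)

theorem not_height_le_of_mem_ulmSub_add_one {x : G} {β : Ordinal.{0}}
    (h : x ∈ ulmSub p G (β + 1)) : ¬ height p x ≤ β := by
  rw [height]
  split_ifs with hex
  · intro hle
    exact (csInf_mem hex).2 (ulmSub_antitone p (add_le_add_left (WithTop.coe_le_coe.mp hle) 1) h)
  · simp

theorem ProperWRT.notMem_sup_ulmSub_add_one {S : AddSubgroup G} {w : G} {β : Ordinal.{0}}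
    (hw : ProperWRT p S w) (h₁ : w ∈ ulmSub p G β) (h₂ : w ∉ ulmSub p G (β + 1)) :
    w ∉ S ⊔ ulmSub p G (β + 1) := by
  intro h
  obtain ⟨s, hs, u, hu, rfl⟩ := AddSubgroup.mem_sup.mp h
  have hheight : height p (s + u + -s) ≤ β :=
    (hw _ (neg_mem hs)).trans (height_le_of_mem_of_notMem p h₁ h₂)
  exact not_height_le_of_mem_ulmSub_add_one p (by simpa using hu) hheight

theorem exists_injective_kapQuot_ulmQuot (S : AddSubgroup G) (β : Ordinal.{0}) :
    ∃ f : kapQuot p S β →+ ulmQuot p G β, Injective f ∧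
      ∀ x : ulmP p G β, (QuotientAddGroup.mk x : ulmQuot p G β) ∈ f.range →
        (x : G) ∈ S ⊔ ulmSub p G (β + 1) := by
  set N := ulmSub p G (β + 1)
  have hKS : kapSub p S β ≤ S := inf_le_left.trans inf_le_left
  have hK : (S ⊓ N).addSubgroupOf (kapSub p S β) = N.addSubgroupOf (kapSub p S β) := by
    ext x
    simp only [AddSubgroup.mem_addSubgroupOf, AddSubgroup.mem_inf]
    exact and_iff_right (hKS x.2)
  have hP : (ulmP p G (β + 1)).addSubgroupOf (ulmP p G β) = N.addSubgroupOf (ulmP p G β) := by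
    ext x
    rw [AddSubgroup.mem_addSubgroupOf, AddSubgroup.mem_addSubgroupOf, ulmP, AddSubgroup.mem_inf]
    exact and_iff_right x.2.1
  have hle : kapSub p S β ≤ ulmP p G β ⊔ N :=
    (inf_le_inf_right _ inf_le_right).trans (ulmSub_inf_comap_ulmSub_add_two_le p β)
  obtain ⟨f, hf, hrange⟩ := AddSubgroup.exists_injective_quotient_of_le_sup hle
  let eK : kapQuot p S β ≃+ _ := QuotientAddGroup.quotientAddEquivOfEq hK
  let eP : ulmQuot p G β ≃+ _ := QuotientAddGroup.quotientAddEquivOfEq hP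
  refine ⟨eP.symm.toAddMonoidHom.comp (f.comp eK.toAddMonoidHom),
    eP.symm.injective.comp (hf.comp eK.injective), fun x ⟨y, hy⟩ => ?_⟩
  exact sup_le_sup_right hKS N (hrange x ⟨eK y, eP.symm_apply_eq.mp hy⟩)

end Ulm

theorem kaplansky_dim_lt_general (p : ℕ) (hp : p.Prime) (B : Type) [AddCommGroup B]
    (S : AddSubgroup B) (β : Ordinal.{0})
    (hfin : ulmInvariant p B β < Cardinal.aleph0)
    (hw : ∃ w ∈ ulmP p B β, (w ∈ ulmSub p B β ∧ w ∉ ulmSub p B (β + 1)) ∧ ProperWRT p S w) :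
    Module.rank (ZMod p) (kapQuot p S β) < ulmInvariant p B β := by
  obtain ⟨w, hwP, ⟨hwβ, hwβ1⟩, hproper⟩ := hw
  have : Fact p.Prime := ⟨hp⟩
  have : FiniteDimensional (ZMod p) (ulmQuot p B β) := Module.rank_lt_aleph0_iff.mp hfin
  obtain ⟨f, hf, hrange⟩ := exists_injective_kapQuot_ulmQuot p S β
  refine rank_lt_rank_of_injective_of_notMem_range (f.toZModLinearMap p) hf
    (w := QuotientAddGroup.mk ⟨w, hwP⟩) fun hmem => ?_
  exact hproper.notMem_sup_ulmSub_add_one p hwβ hwβ1 (hrange _ hmem)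

/-- If `u_β(B)` is finite and `P_β(B)` contains an element of height exactly `β` proper with
respect to the finite subgroup `S`, then
`dim (S ∩ B_β ∩ p⁻¹B_{β+2})/(S ∩ B_{β+1}) < u_β(B)`. -/
theorem kaplansky_dim_lt (p : ℕ) (hp : p.Prime) (B : Type) [AddCommGroup B]
    (hB : IsAbelianPGroup p B) (hred : IsReducedPGroup p B)
    (S : AddSubgroup B) (hS : (S : Set B).Finite) (β : Ordinal.{0})
    (hfin : ulmInvariant p B β < Cardinal.aleph0)
    (hw : ∃ w ∈ ulmP p B β, (w ∈ ulmSub p B β ∧ w ∉ ulmSub p B (β + 1)) ∧ ProperWRT p S w) :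
    Module.rank (ZMod p) (kapQuot p S β) < ulmInvariant p B β :=
  kaplansky_dim_lt_general p hp B S β hfin hw
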